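/- Let $\mathcal{F} = \mathbb{C}(x_1, x_2)$ carry the Poisson bracket with $\{x_1, x_2\} = 2\widehat{\varepsilon}_{12} x_1 x_2$ for a rational number $\widehat{\varepsilon}_{12}$, extended to $\mathcal{F}$ as a biderivation. Suppose $\varepsilon_{12} := \widehat{\varepsilon}_{12} d_2$ and $\varepsilon_{21} := -\widehat{\varepsilon}_{12} d_1$ are integers (with $d_1, d_2$ positive integers). Define the mutation in direction $k=1$: $x_1' = x_1^{-1}$ and $x_2' = x_2 (1 + x_1^{-\mathrm{sgn}(\varepsilon_{21})})^{-\varepsilon_{21}}$. Then $\{x_1', x_2'\} = -2\widehat{\varepsilon}_{12}\, x_1' x_2'$; that is, the mutated coordinates are again log-canonical with exchange matrix entry $\varepsilon'_{21} = -\varepsilon_{21}$. -/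

import Mathlib

/-!
Since `{y, y} = 0` and `{y, ·}` is a derivation, `{y, ·}` kills every element built from `y`
by field operations; in particular `{x₁⁻¹, ·}` kills `(1 + x₁^s)^n` and hence
`{x₁', x₂'} = {x₁⁻¹, x₂} (1 + x₁^s)^n`. Inverting one coordinate of a log-canonical pair
flips the sign of its bracket: `{x₁⁻¹, x₂} = -2ε̂₁₂ x₁⁻¹ x₂`.
-/

namespace Derivation

variable {R A : Type*} [CommRing R] [CommRing A] [Algebra R A]

def ofIsLinearMap (D : A → A) (hlin : IsLinearMap R D)
    (hleib : ∀ a b, D (a * b) = D a * b + a * D b) : Derivation R A A :=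
  mk' (IsLinearMap.mk' D hlin) fun a b => by
    simp only [IsLinearMap.mk'_apply, hleib, smul_eq_mul]
    ring

@[simp]
theorem coe_ofIsLinearMap (D : A → A) (hlin : IsLinearMap R D)
    (hleib : ∀ a b, D (a * b) = D a * b + a * D b) : ⇑(ofIsLinearMap D hlin hleib) = D :=
  rfl

end Derivation

section Bracket

variable {R K : Type*} [CommRing R] [Field K] [Algebra R K] {br : K → K → K}

theorem bracket_self_eq_zero [CharZero K] (hskew : ∀ x y, br x y = -br y x) (x : K) :
    br x x = 0 :=
  CharZero.eq_neg_self_iff.mp (hskew x x)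

variable (hlin : ∀ x, IsLinearMap R (br x))
  (hleib : ∀ x y z, br x (y * z) = br x y * z + y * br x z)
include hlin hleib

theorem bracket_inv_right (x y : K) : br x y⁻¹ = -y⁻¹ ^ 2 * br x y :=
  (Derivation.ofIsLinearMap (br x) (hlin x) (hleib x)).leibniz_inv y

theorem bracket_inv_left (hskew : ∀ x y, br x y = -br y x) (x y : K) :
    br x⁻¹ y = -x⁻¹ ^ 2 * br x y := by
  rw [hskew, bracket_inv_right hlin hleib, hskew y x]
  ring

theorem bracket_inv_left_of_eq_mul_mul (hskew : ∀ x y, br x y = -br y x) {a b c : K}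
    (h : br a b = c * (a * b)) : br a⁻¹ b = -c * (a⁻¹ * b) := by
  rw [bracket_inv_left hlin hleib hskew, h]
  rcases eq_or_ne a 0 with rfl | ha
  · simp
  · field_simp

theorem bracket_inv_mul_one_add_zpow_zpow [CharZero K] (hskew : ∀ x y, br x y = -br y x)
    (a b : K) (s n : ℤ) : br a⁻¹ (b * (1 + a ^ s) ^ n) = br a⁻¹ b * (1 + a ^ s) ^ n := by
  set D := Derivation.ofIsLinearMap (br a⁻¹) (hlin a⁻¹) (hleib a⁻¹)
  have hDa : D a = 0 := by
    simp only [D, Derivation.coe_ofIsLinearMap, bracket_inv_left hlin hleib hskew,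
      bracket_self_eq_zero hskew, mul_zero]
  have hDu : D ((1 + a ^ s) ^ n) = 0 := by
    simp [Derivation.leibniz_zpow, hDa]
  have := D.leibniz b ((1 + a ^ s) ^ n)
  simp only [D, Derivation.coe_ofIsLinearMap, smul_eq_mul] at this hDu
  rw [this, hDu]
  ring

end Bracket

theorem rank2_poisson_mutation_general
    (εh : ℚ) (ε21 : ℤ)
    (br : FractionRing (MvPolynomial (Fin 2) ℂ) → FractionRing (MvPolynomial (Fin 2) ℂ)
        → FractionRing (MvPolynomial (Fin 2) ℂ))
    (hlin : ∀ x, IsLinearMap ℂ (br x))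
    (hskew : ∀ x y, br x y = -br y x)
    (hleib : ∀ x y z, br x (y * z) = br x y * z + y * br x z) :
    let F := FractionRing (MvPolynomial (Fin 2) ℂ)
    let x1 : F := algebraMap (MvPolynomial (Fin 2) ℂ) F (MvPolynomial.X 0)
    let x2 : F := algebraMap (MvPolynomial (Fin 2) ℂ) F (MvPolynomial.X 1)
    let x1' : F := x1⁻¹
    let x2' : F := x2 * (1 + x1 ^ (-(Int.sign ε21))) ^ (-ε21)
    br x1 x2 = algebraMap ℂ F (2 * (εh : ℂ)) * (x1 * x2) →
      br x1' x2' = algebraMap ℂ F (-(2 * (εh : ℂ))) * (x1' * x2') := by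
  intro F x1 x2 x1' x2' hbr
  rw [bracket_inv_mul_one_add_zpow_zpow hlin hleib hskew,
    bracket_inv_left_of_eq_mul_mul hlin hleib hskew hbr, map_neg]
  ring

/-- Rank-2 compatibility of cluster mutation with the Poisson structure: if
`{x₁, x₂} = 2ε̂₁₂ x₁x₂` and the mutated coordinates in direction `k = 1` are
`x₁' = x₁⁻¹`, `x₂' = x₂(1 + x₁^{-sgn ε₂₁})^{-ε₂₁}`, then
`{x₁', x₂'} = -2ε̂₁₂ x₁'x₂'`. -/
theorem rank2_poisson_mutation
    (εh : ℚ) (d1 d2 : ℤ) (hd1 : 0 < d1) (hd2 : 0 < d2)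
    (ε12 ε21 : ℤ) (h12 : (ε12 : ℚ) = εh * d2) (h21 : (ε21 : ℚ) = -(εh * d1))
    (br : FractionRing (MvPolynomial (Fin 2) ℂ) → FractionRing (MvPolynomial (Fin 2) ℂ)
        → FractionRing (MvPolynomial (Fin 2) ℂ))
    (hlin : ∀ x, IsLinearMap ℂ (br x))
    (hskew : ∀ x y, br x y = -br y x)
    (hleib : ∀ x y z, br x (y * z) = br x y * z + y * br x z) :
    let F := FractionRing (MvPolynomial (Fin 2) ℂ)
    let x1 : F := algebraMap (MvPolynomial (Fin 2) ℂ) F (MvPolynomial.X 0)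
    let x2 : F := algebraMap (MvPolynomial (Fin 2) ℂ) F (MvPolynomial.X 1)
    let x1' : F := x1⁻¹
    let x2' : F := x2 * (1 + x1 ^ (-(Int.sign ε21))) ^ (-ε21)
    br x1 x2 = algebraMap ℂ F (2 * (εh : ℂ)) * (x1 * x2) →
      br x1' x2' = algebraMap ℂ F (-(2 * (εh : ℂ))) * (x1' * x2') :=
  rank2_poisson_mutation_general εh ε21 br hlin hskew hleib
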